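/- arXiv:1512.05446 — 4 statements merged into one kernel-verified Lean document; each statement's English description precedes it below -/
import Mathlib

section
/- If Y is the maximum of k i.i.d. random variables from the PRHR model F(x) = F0(x)^{1/γ}, then −(1/m)Σ ki·log F0(Yi), computed over m independent such maxima Yi with set sizes ki, is an unbiased estimator of γ with variance γ²/m. -/
/-!
If `W` has distribution function `F0 ^ (n / γ)` with `F0` continuous, then `V = F0 (W)` satisfies
`P(V ≤ u) = u ^ (n / γ)` on `(0, 1)`: every level `u` is attained by `F0` and `{F0 ≤ u}` is a
closed half-line. Hence `-n log V` is exponential with mean `γ`, `P(-n log V ≥ t) = exp(-t / γ)`,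
and the layer-cake formula gives its first two moments `γ` and `2γ²`. Averaging `m` independent
such statistics keeps the mean `γ` and divides the variance `γ²` by `m`.
-/

open MeasureTheory ProbabilityTheory Real Set Filter Topology
open scoped Nat

section ExponentialTail

variable {Ω : Type*} [MeasurableSpace Ω] {μ : Measure Ω} {Z : Ω → ℝ} {γ : ℝ}

lemma integral_exp_neg_mul_mul_pow_Ioi (hγ : 0 < γ) (n : ℕ) :
    ∫ t in Ioi (0 : ℝ), exp (-(γ⁻¹ * t)) * ((n + 1) * t ^ n) = (n + 1)! * γ ^ (n + 1) := by
  have h := integral_rpow_mul_exp_neg_mul_Ioi (a := n + 1) (by positivity) (inv_pos.2 hγ)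
  rw [add_sub_cancel_right, one_div, inv_inv, Gamma_nat_eq_factorial, ← Nat.cast_add_one,
    rpow_natCast] at h
  calc ∫ t in Ioi (0 : ℝ), exp (-(γ⁻¹ * t)) * ((n + 1) * t ^ n)
      = (n + 1) * ∫ t in Ioi (0 : ℝ), t ^ (n : ℝ) * exp (-(γ⁻¹ * t)) := by
        rw [← integral_const_mul]
        refine setIntegral_congr_fun measurableSet_Ioi fun t _ => ?_
        rw [rpow_natCast]
        ring
    _ = (n + 1)! * γ ^ (n + 1) := by
        rw [h, Nat.factorial_succ]
        push_cast
        ring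

lemma lintegral_ofReal_pow_of_exponential_tail (hγ : 0 < γ) (hZ_nonneg : 0 ≤ Z)
    (hZ : Measurable Z) (htail : ∀ t > 0, μ {ω | t ≤ Z ω} = ENNReal.ofReal (exp (-(γ⁻¹ * t))))
    (n : ℕ) :
    ∫⁻ ω, ENNReal.ofReal (Z ω ^ (n + 1)) ∂μ = ENNReal.ofReal ((n + 1)! * γ ^ (n + 1)) := by
  have hprimitive : ∀ x : ℝ, ∫ t in (0 : ℝ)..x, (n + 1) * t ^ n = x ^ (n + 1) := fun x => by
    rw [intervalIntegral.integral_const_mul, integral_pow]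
    field_simp
    ring
  have hdensity_nonneg : ∀ᵐ t ∂volume.restrict (Ioi (0 : ℝ)),
      0 ≤ exp (-(γ⁻¹ * t)) * ((n + 1) * t ^ n) :=
    (ae_restrict_iff' measurableSet_Ioi).2 (ae_of_all _ fun t ht => by
      have := ht.out.le
      positivity)
  have hintegrable : IntegrableOn (fun t => exp (-(γ⁻¹ * t)) * ((n + 1) * t ^ n)) (Ioi 0) :=
    Integrable.of_integral_ne_zero (by rw [integral_exp_neg_mul_mul_pow_Ioi hγ]; positivity)
  calc ∫⁻ ω, ENNReal.ofReal (Z ω ^ (n + 1)) ∂μ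
      = ∫⁻ t in Ioi 0, μ {ω | t ≤ Z ω} * ENNReal.ofReal ((n + 1) * t ^ n) := by
        simpa only [hprimitive] using lintegral_comp_eq_lintegral_meas_le_mul μ
          (ae_of_all _ hZ_nonneg) hZ.aemeasurable
          (fun t _ =>
            (by fun_prop : Continuous fun t : ℝ => (n + 1) * t ^ n).intervalIntegrable 0 t)
          (hdensity_nonneg.mono fun t ht => nonneg_of_mul_nonneg_right ht (exp_pos _))
    _ = ∫⁻ t in Ioi 0, ENNReal.ofReal (exp (-(γ⁻¹ * t)) * ((n + 1) * t ^ n)) :=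
        setLIntegral_congr_fun measurableSet_Ioi fun t ht => by
          rw [htail t ht, ← ENNReal.ofReal_mul (exp_pos _).le]
    _ = ENNReal.ofReal ((n + 1)! * γ ^ (n + 1)) := by
        rw [← ofReal_integral_eq_lintegral_ofReal hintegrable hdensity_nonneg,
          integral_exp_neg_mul_mul_pow_Ioi hγ]

lemma integrable_and_integral_eq_of_lintegral_ofReal_eq {f : Ω → ℝ} (hf_nonneg : 0 ≤ f)
    (hf : AEStronglyMeasurable f μ) {c : ℝ} (hc : 0 ≤ c)
    (h : ∫⁻ ω, ENNReal.ofReal (f ω) ∂μ = ENNReal.ofReal c) :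
    Integrable f μ ∧ ∫ ω, f ω ∂μ = c :=
  ⟨⟨hf, by
      rw [hasFiniteIntegral_iff_ofReal (ae_of_all _ hf_nonneg), h]
      exact ENNReal.ofReal_lt_top⟩,
    by rw [integral_eq_lintegral_of_nonneg_ae (ae_of_all _ hf_nonneg) hf, h,
      ENNReal.toReal_ofReal hc]⟩

lemma integrable_pow_and_integral_pow_of_exponential_tail (hγ : 0 < γ) (hZ_nonneg : 0 ≤ Z)
    (hZ : Measurable Z) (htail : ∀ t > 0, μ {ω | t ≤ Z ω} = ENNReal.ofReal (exp (-(γ⁻¹ * t))))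
    (n : ℕ) :
    Integrable (fun ω => Z ω ^ (n + 1)) μ ∧ ∫ ω, Z ω ^ (n + 1) ∂μ = (n + 1)! * γ ^ (n + 1) :=
  integrable_and_integral_eq_of_lintegral_ofReal_eq (fun ω => pow_nonneg (hZ_nonneg ω) _)
    (hZ.pow_const _).aestronglyMeasurable (by positivity)
    (lintegral_ofReal_pow_of_exponential_tail hγ hZ_nonneg hZ htail n)

theorem memLp_two_and_integral_and_variance_of_exponential_tail [IsProbabilityMeasure μ]
    (hγ : 0 < γ) (hZ_nonneg : 0 ≤ Z) (hZ : Measurable Z)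
    (htail : ∀ t > 0, μ {ω | t ≤ Z ω} = ENNReal.ofReal (exp (-(γ⁻¹ * t)))) :
    MemLp Z 2 μ ∧ μ[Z] = γ ∧ Var[Z; μ] = γ ^ 2 := by
  obtain ⟨-, hmean⟩ := integrable_pow_and_integral_pow_of_exponential_tail hγ hZ_nonneg hZ htail 0
  obtain ⟨hsq_int, hsq⟩ :=
    integrable_pow_and_integral_pow_of_exponential_tail hγ hZ_nonneg hZ htail 1
  simp only [zero_add, pow_one, Nat.factorial_one, Nat.cast_one, one_mul] at hmean
  have hmemLp : MemLp Z 2 μ := (memLp_two_iff_integrable_sq hZ.aestronglyMeasurable).2 hsq_int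
  refine ⟨hmemLp, hmean, ?_⟩
  rw [variance_eq_sub hmemLp]
  simp only [Pi.pow_apply, hsq, hmean]
  norm_num
  ring

end ExponentialTail

section ContinuousCDF

variable {G : ℝ → ℝ}

lemma exists_eq_and_preimage_Iic_eq_Iic (hG : Continuous G) (hG_mono : Monotone G) {u : ℝ}
    (hu : u ∈ range G) (hu_lt : ∃ x, u < G x) : ∃ a, G a = u ∧ G ⁻¹' Iic u = Iic a := by
  obtain ⟨x₀, rfl⟩ := hu
  obtain ⟨x₁, hx₁⟩ := hu_lt
  set S := G ⁻¹' Iic (G x₀)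
  have hx₀ : x₀ ∈ S := show G x₀ ≤ G x₀ from le_rfl
  have hS_bdd : BddAbove S := ⟨x₁, fun y hy => (hG_mono.reflect_lt (lt_of_le_of_lt hy hx₁)).le⟩
  have hsup : sSup S ∈ S := (isClosed_Iic.preimage hG).csSup_mem ⟨x₀, hx₀⟩ hS_bdd
  exact ⟨sSup S, le_antisymm hsup (hG_mono (le_csSup hS_bdd hx₀)),
    Subset.antisymm (fun y hy => le_csSup hS_bdd hy) fun y hy => (hG_mono hy).trans hsup⟩

variable {Ω : Type*} [MeasurableSpace Ω] {μ : Measure Ω} {W : Ω → ℝ} {Φ : ℝ → ℝ}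

lemma measure_comp_le_of_measure_le (hG : Continuous G) (hG_mono : Monotone G)
    (hG_bot : Tendsto G atBot (𝓝 0)) (hG_top : Tendsto G atTop (𝓝 1))
    (hW : ∀ x, μ {ω | W ω ≤ x} = ENNReal.ofReal (Φ (G x))) {u : ℝ} (hu : u ∈ Ioo 0 1) :
    μ {ω | G (W ω) ≤ u} = ENNReal.ofReal (Φ u) := by
  obtain ⟨x₀, hx₀⟩ := (hG_bot.eventually (eventually_lt_nhds hu.1)).exists
  obtain ⟨x₁, hx₁⟩ := (hG_top.eventually (eventually_gt_nhds hu.2)).exists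
  obtain ⟨a, rfl, ha⟩ := exists_eq_and_preimage_Iic_eq_Iic hG hG_mono
    (intermediate_value_univ x₀ x₁ hG ⟨hx₀.le, hx₁.le⟩) ⟨x₁, hx₁⟩
  rw [← hW a]
  exact congrArg μ (congrArg (W ⁻¹' ·) ha)

lemma measure_comp_nonpos_eq_zero (hG : Continuous G) (hG_mono : Monotone G)
    (hG_bot : Tendsto G atBot (𝓝 0)) (hG_top : Tendsto G atTop (𝓝 1))
    (hW : ∀ x, μ {ω | W ω ≤ x} = ENNReal.ofReal (Φ (G x))) (hΦ : Tendsto Φ (𝓝[>] 0) (𝓝 0)) :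
    μ {ω | G (W ω) ≤ 0} = 0 := by
  have hlim : Tendsto (fun u => ENNReal.ofReal (Φ u)) (𝓝[>] 0) (𝓝 0) := by
    simpa using ENNReal.tendsto_ofReal hΦ
  refine nonpos_iff_eq_zero.1 (ge_of_tendsto hlim ?_)
  filter_upwards [Ioo_mem_nhdsGT zero_lt_one] with u hu
  rw [← measure_comp_le_of_measure_le hG hG_mono hG_bot hG_top hW hu]
  exact measure_mono fun ω hω => le_trans hω hu.1.le

end ContinuousCDF

section PRHR

variable {Ω : Type*} [MeasurableSpace Ω] {μ : Measure Ω} {G : ℝ → ℝ} {W : Ω → ℝ} {γ : ℝ} {n : ℕ}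

lemma measure_le_neg_mul_log_comp (hγ : 0 < γ) (hn : 1 ≤ n) (hG : Continuous G)
    (hG_mono : Monotone G) (hG_bot : Tendsto G atBot (𝓝 0)) (hG_top : Tendsto G atTop (𝓝 1))
    (hW : ∀ x, μ {ω | W ω ≤ x} = ENNReal.ofReal ((G x ^ (1 / γ)) ^ n)) {t : ℝ} (ht : 0 < t) :
    μ {ω | t ≤ -(n * log (G (W ω)))} = ENNReal.ofReal (exp (-(γ⁻¹ * t))) := by
  have hn₀ : (0 : ℝ) < n := by exact_mod_cast hn
  set u := exp (-(t / n))
  have hu : u ∈ Ioo 0 1 := ⟨exp_pos _, exp_lt_one_iff.2 (neg_neg_of_pos (div_pos ht hn₀))⟩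
  -- On `{G ∘ W = 0}` the junk value `log 0 = 0` makes the statistic vanish, hence the difference.
  have hset : {ω | t ≤ -(n * log (G (W ω)))} = {ω | G (W ω) ≤ u} \ {ω | G (W ω) ≤ 0} := by
    ext ω
    rcases (hG_mono.le_of_tendsto hG_bot (W ω)).eq_or_lt with hv | hv
    · simp [← hv, ht.not_ge]
    · simp only [mem_ofPred_eq, Set.mem_sdiff, not_le.2 hv, not_false_eq_true, and_true]
      rw [le_neg, ← le_div_iff₀' hn₀, neg_div, log_le_iff_le_exp hv]
  have hpow : (u ^ (1 / γ)) ^ n = exp (-(γ⁻¹ * t)) := by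
    rw [← exp_mul, ← exp_nat_mul]
    congr 1
    field_simp
  have hΦ : Tendsto (fun v : ℝ => (v ^ (1 / γ)) ^ n) (𝓝[>] 0) (𝓝 0) := by
    have hcont : ContinuousAt (fun v : ℝ => (v ^ (1 / γ)) ^ n) 0 :=
      (continuousAt_rpow_const _ _ (Or.inr (by positivity))).pow n
    have hlim := hcont.tendsto
    rw [zero_rpow (by positivity), zero_pow (by omega)] at hlim
    exact hlim.mono_left nhdsWithin_le_nhds
  rw [hset, measure_sdiff_null (measure_comp_nonpos_eq_zero (Φ := fun v => (v ^ (1 / γ)) ^ n)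
    hG hG_mono hG_bot hG_top hW hΦ), measure_comp_le_of_measure_le
    (Φ := fun v => (v ^ (1 / γ)) ^ n) hG hG_mono hG_bot hG_top hW hu, hpow]

theorem memLp_two_and_integral_and_variance_neg_mul_log_comp [IsProbabilityMeasure μ]
    (hγ : 0 < γ) (hn : 1 ≤ n) (hG : Continuous G) (hG_mono : Monotone G)
    (hG_bot : Tendsto G atBot (𝓝 0)) (hG_top : Tendsto G atTop (𝓝 1)) (hW_meas : Measurable W)
    (hW : ∀ x, (μ {ω | W ω ≤ x}).toReal = (G x ^ (1 / γ)) ^ n) :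
    MemLp (fun ω => -(n * log (G (W ω)))) 2 μ ∧ μ[fun ω => -(n * log (G (W ω)))] = γ ∧
      Var[fun ω => -(n * log (G (W ω))); μ] = γ ^ 2 := by
  have hW' : ∀ x, μ {ω | W ω ≤ x} = ENNReal.ofReal ((G x ^ (1 / γ)) ^ n) := fun x => by
    rw [← hW x, ENNReal.ofReal_toReal (measure_ne_top _ _)]
  have hnonneg : 0 ≤ fun ω => -(n * log (G (W ω))) := fun ω =>
    neg_nonneg.2 (mul_nonpos_of_nonneg_of_nonpos n.cast_nonneg
      (log_nonpos (hG_mono.le_of_tendsto hG_bot _) (hG_mono.ge_of_tendsto hG_top _)))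
  exact memLp_two_and_integral_and_variance_of_exponential_tail hγ hnonneg (by fun_prop)
    fun t ht => measure_le_neg_mul_log_comp hγ hn hG hG_mono hG_bot hG_top hW' ht

end PRHR

section Average

variable {Ω ι : Type*} [MeasurableSpace Ω] {μ : Measure Ω} [Fintype ι]
  {X : ι → Ω → ℝ}

lemma integral_average [Nonempty ι] (hX : ∀ i, Integrable (X i) μ) {c : ℝ}
    (hmean : ∀ i, μ[X i] = c) :
    ∫ ω, 1 / (Fintype.card ι : ℝ) * ∑ i, X i ω ∂μ = c := by
  rw [integral_const_mul, integral_finsetSum _ fun i _ => hX i]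
  simp only [hmean, Finset.sum_const, Finset.card_univ, nsmul_eq_mul]
  field_simp

lemma variance_average [IsProbabilityMeasure μ] (hX : ∀ i, MemLp (X i) 2 μ)
    (hindep : iIndepFun X μ) {σ2 : ℝ} (hvar : ∀ i, Var[X i; μ] = σ2) :
    Var[fun ω => 1 / (Fintype.card ι : ℝ) * ∑ i, X i ω; μ] = σ2 / Fintype.card ι := by
  have hsum : (fun ω => ∑ i, X i ω) = ∑ i, X i := by
    ext ω
    rw [Finset.sum_apply]
  rw [variance_const_mul, hsum,
    IndepFun.variance_sum (fun i _ => hX i) fun i _ j _ hij => hindep.indepFun hij]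
  simp only [hvar, Finset.sum_const, Finset.card_univ, nsmul_eq_mul]
  field_simp

end Average

/-- If `Y i` is the maximum of `k i` i.i.d. random variables from the PRHR
model `F(x) = (F0 x)^(1/γ)` (so `Y i` has CDF `((F0 x)^(1/γ))^(k i)`), and the `Y i` are
independent, then `-(1/m) Σ (k i) log (F0 (Y i))` is unbiased for `γ` with variance `γ²/m`. -/
theorem prhr_mans_ml_estimator
    {Ω : Type*} [MeasureSpace Ω] [IsProbabilityMeasure (ℙ : Measure Ω)]
    (m : ℕ) (hm : 1 ≤ m) (γ : ℝ) (hγ : 0 < γ)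
    (F0 : ℝ → ℝ) (hF0mono : Monotone F0) (hF0cont : Continuous F0)
    (hF0bot : Filter.Tendsto F0 Filter.atBot (nhds 0))
    (hF0top : Filter.Tendsto F0 Filter.atTop (nhds 1))
    (k : Fin m → ℕ) (hk : ∀ i, 1 ≤ k i)
    (Y : Fin m → Ω → ℝ) (hmeas : ∀ i, Measurable (Y i))
    (hindep : iIndepFun Y ℙ)
    (hmax : ∀ i x, (ℙ {ω | Y i ω ≤ x}).toReal = ((F0 x) ^ (1 / γ)) ^ (k i)) :
    (∫ ω, -(1 / (m : ℝ)) * ∑ i, (k i : ℝ) * Real.log (F0 (Y i ω)) ∂ℙ) = γ ∧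
    variance (fun ω => -(1 / (m : ℝ)) * ∑ i, (k i : ℝ) * Real.log (F0 (Y i ω))) ℙ
      = γ ^ 2 / m := by
  let Z : Fin m → Ω → ℝ := fun i ω => -(k i * log (F0 (Y i ω)))
  have hZ : ∀ i, MemLp (Z i) 2 ℙ ∧ ℙ[Z i] = γ ∧ Var[Z i; ℙ] = γ ^ 2 := fun i =>
    memLp_two_and_integral_and_variance_neg_mul_log_comp hγ (hk i) hF0cont hF0mono hF0bot hF0top
      (hmeas i) (hmax i)
  have hZ_indep : iIndepFun Z ℙ :=
    hindep.comp (fun i x => -(k i * log (F0 x))) fun i => by fun_prop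
  have hestimator : (fun ω => -(1 / (m : ℝ)) * ∑ i, (k i : ℝ) * log (F0 (Y i ω))) =
      fun ω => 1 / (Fintype.card (Fin m) : ℝ) * ∑ i, Z i ω := by
    ext ω
    simp only [Z, Fintype.card_fin, Finset.sum_neg_distrib]
    ring
  have : Nonempty (Fin m) := ⟨⟨0, hm⟩⟩
  rw [hestimator, integral_average (fun i => (hZ i).1.integrable one_le_two) fun i => (hZ i).2.1,
    variance_average (fun i => (hZ i).1) hZ_indep fun i => (hZ i).2.2, Fintype.card_fin]
  exact ⟨rfl, rfl⟩
end

section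
/- Let Y be an RNS complete-data observation from the PHR model with set size k and indicator z, having density g(y) = k·(1/γ)·f0(y)/(1−F0(y))·((1−F0(y))^{1/γ})^{α−1}·(1 − (1−F0(y))^{1/γ})^{β}, where α = (1−z)(k−1)+2 and β = z(k−1). Then E[log(1−F0(Y))] = γ·k·B(α−1, β+1)·(ψ(α−1) − ψ(α+β)). -/
/-!
Put `u = (1 - F0 y) ^ (1 / γ)`, the survival function of the PHR model. Then
`log (1 - F0 y) = γ log u` and `g(y) dy = -k u ^ (α - 2) (1 - u) ^ β du`, so the change of
variables for the antitone map `y ↦ u` (which need not be injective) gives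
`E[log (1 - F0 Y)] = γ k ∫₀¹ log u · u ^ (α - 2) (1 - u) ^ β du`. For `z = 0` and `z = 1` the
integrand is `log u · u ^ (k - 1)` and `log u · (1 - u) ^ (k - 1)`, with integrals `-1 / k²` and
`-H_k / k`; on the other side `B(k, 1) = B(1, k) = 1 / k`, and `ψ(n + 1) = H_n - γ_E` follows from
`Γ'(n + 1) = n! (H_n - γ_E)`.
-/

open MeasureTheory ProbabilityTheory Real

/-- The digamma function `ψ = (log Γ)'`. -/
noncomputable def digamma (x : ℝ) : ℝ := deriv (fun t => Real.log (Real.Gamma t)) x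

/-- The Beta function `B(α, β) = Γ(α) Γ(β) / Γ(α + β)`. -/
noncomputable def betaFn (a b : ℝ) : ℝ := Real.Gamma a * Real.Gamma b / Real.Gamma (a + b)

open Set Filter Topology

theorem digamma_natCast_add_one (n : ℕ) :
    digamma (n + 1) = harmonic n - eulerMascheroniConstant := by
  have hpos : 0 < Gamma (n + 1) := Gamma_pos_of_pos (by positivity)
  have hd : DifferentiableAt ℝ Gamma (n + 1) :=
    differentiableAt_Gamma fun m ↦ by linarith [(m.cast_nonneg : (0 : ℝ) ≤ m)]
  rw [digamma, deriv.log hd hpos.ne', deriv_Gamma_nat, Gamma_nat_eq_factorial]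
  field_simp
  ring

theorem betaFn_comm (a b : ℝ) : betaFn a b = betaFn b a := by
  rw [betaFn, betaFn, mul_comm, add_comm]

theorem betaFn_one_right {a : ℝ} (ha : 0 < a) : betaFn a 1 = 1 / a := by
  rw [betaFn, Gamma_one, Gamma_add_one ha.ne']
  field_simp [(Gamma_pos_of_pos ha).ne']

theorem intervalIntegrable_log_mul {f : ℝ → ℝ} {a b : ℝ} (hf : Continuous f) :
    IntervalIntegrable (fun x ↦ log x * f x) volume a b :=
  intervalIntegral.intervalIntegrable_log'.mul_continuousOn hf.continuousOn

theorem integral_log_mul_pow (n : ℕ) :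
    ∫ x in (0 : ℝ)..1, log x * x ^ n = -1 / ((n : ℝ) + 1) ^ 2 := by
  have hn : (n : ℝ) + 1 ≠ 0 := by positivity
  let A : ℝ → ℝ := fun t ↦ t ^ n * (t * log t) / (n + 1) - t ^ (n + 1) / ((n : ℝ) + 1) ^ 2
  have hA : ∀ t ∈ Ioo (0 : ℝ) 1, HasDerivAt A (log t * t ^ n) t := by
    intro t ht
    refine ((((hasDerivAt_pow n t).mul (hasDerivAt_mul_log ht.1.ne')).div_const _).sub
      ((hasDerivAt_pow (n + 1) t).div_const _)).congr_deriv ?_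
    rcases n with _ | n
    · field_simp
      ring
    · push_cast
      simp only [pow_succ]
      field_simp
      ring
  have hcont : ContinuousOn A (Icc 0 1) := by
    have := continuous_mul_log
    fun_prop
  rw [intervalIntegral.integral_eq_sub_of_hasDerivAt_of_le zero_le_one hcont hA
    (intervalIntegrable_log_mul (continuous_pow n))]
  simp [A]
  field_simp

theorem integral_log_mul_one_sub_pow (n : ℕ) :
    ∫ x in (0 : ℝ)..1, log x * (1 - x) ^ n = -(harmonic (n + 1) : ℝ) / ((n : ℝ) + 1) := by
  have hn : (n : ℝ) + 1 ≠ 0 := by positivity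
  have hgeom (t : ℝ) : 1 - (1 - t) ^ (n + 1) = t * ∑ i ∈ Finset.range (n + 1), (1 - t) ^ i := by
    rw [← geom_sum_mul_neg]
    ring
  let A : ℝ → ℝ := fun t ↦ (log t * (1 - (1 - t) ^ (n + 1)) +
    ∑ i ∈ Finset.range (n + 1), (1 - t) ^ (i + 1) / ((i : ℝ) + 1)) / ((n : ℝ) + 1)
  have hA : ∀ t ∈ Ioo (0 : ℝ) 1, HasDerivAt A (log t * (1 - t) ^ n) t := by
    intro t ht
    have hpow (m : ℕ) : HasDerivAt (fun t : ℝ ↦ (1 - t) ^ (m + 1)) (-((m + 1) * (1 - t) ^ m)) t :=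
      (((hasDerivAt_id t).const_sub 1).pow (m + 1)).congr_deriv (by simp)
    have hsum := HasDerivAt.fun_sum (u := Finset.range (n + 1)) fun i _ ↦
      ((hpow i).div_const ((i : ℝ) + 1)).congr_deriv (g' := -(1 - t) ^ i) (by field_simp)
    refine ((((hasDerivAt_log ht.1.ne').mul ((hpow n).const_sub 1)).add hsum).div_const
      _).congr_deriv ?_
    have hgeom_t := hgeom t
    have ht0 : t ≠ 0 := ht.1.ne'
    rw [Finset.sum_neg_distrib]
    field_simp
    linear_combination hgeom_t
  have hcont : ContinuousOn A (Icc 0 1) := by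
    -- near `0`, `log t` only occurs through the continuous `t * log t`
    have hA' : A = fun t ↦ (t * log t * ∑ i ∈ Finset.range (n + 1), (1 - t) ^ i +
        ∑ i ∈ Finset.range (n + 1), (1 - t) ^ (i + 1) / ((i : ℝ) + 1)) / ((n : ℝ) + 1) := by
      funext t
      simp only [A, hgeom]
      ring
    have := continuous_mul_log
    rw [hA']
    fun_prop
  rw [intervalIntegral.integral_eq_sub_of_hasDerivAt_of_le zero_le_one hcont hA
    (intervalIntegrable_log_mul (by fun_prop))]
  simp [A, harmonic]
  field_simp

theorem integral_log_mul_rpow_mul_one_sub_rpow {a b : ℝ} (n : ℕ)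
    (hab : a = n + 1 ∧ b = 1 ∨ a = 1 ∧ b = n + 1) :
    ∫ u in (0 : ℝ)..1, log u * u ^ (a - 1) * (1 - u) ^ (b - 1) =
      betaFn a b * (digamma a - digamma (a + b)) := by
  have hn : (0 : ℝ) < n + 1 := by positivity
  have hψ : digamma ((n : ℝ) + 1 + 1) = harmonic (n + 1) - eulerMascheroniConstant := by
    exact_mod_cast digamma_natCast_add_one (n + 1)
  rcases hab with ⟨rfl, rfl⟩ | ⟨rfl, rfl⟩
  · simp only [add_sub_cancel_right, sub_self, rpow_zero, mul_one, rpow_natCast,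
      integral_log_mul_pow]
    rw [betaFn_one_right hn, hψ, digamma_natCast_add_one, harmonic_succ]
    push_cast
    field_simp
    ring
  · have hψ1 : digamma 1 = -eulerMascheroniConstant := by
      simpa using digamma_natCast_add_one 0
    simp only [add_sub_cancel_right, sub_self, rpow_zero, mul_one, rpow_natCast,
      integral_log_mul_one_sub_pow]
    rw [betaFn_comm, betaFn_one_right hn, add_comm 1, hψ, hψ1]
    field_simp
    ring

theorem setIntegral_neg_deriv_smul_comp_of_antitone {E : Type*} [NormedAddCommGroup E]
    [NormedSpace ℝ E] {U U' : ℝ → ℝ} {a b : ℝ} (hU : Continuous U) (hanti : Antitone U)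
    (hbot : Tendsto U atBot (𝓝 b)) (htop : Tendsto U atTop (𝓝 a))
    (hderiv : ∀ y, a < U y → HasDerivAt U (U' y) y) (g : ℝ → E) :
    ∫ y in {y | a < U y}, (-U' y) • g (U y) = ∫ u in Ioo a b, g u := by
  have hP : MeasurableSet {y | a < U y} := measurableSet_lt measurable_const hU.measurable
  rw [← integral_image_eq_integral_deriv_smul_of_antitoneOn hP
    (fun y hy ↦ (hderiv y hy).hasDerivWithinAt) (hanti.antitoneOn _)]
  have hsub : Ioo a b ⊆ U '' {y | a < U y} := fun u hu ↦ by
    obtain ⟨y, rfl⟩ := mem_range_of_exists_le_of_exists_ge hU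
      (htop.eventually (eventually_le_nhds hu.1)).exists
      (hbot.eventually (eventually_ge_nhds hu.2)).exists
    exact ⟨y, hu.1, rfl⟩
  have hsup : U '' {y | a < U y} ⊆ Icc a b := by
    rintro _ ⟨y, hy, rfl⟩
    exact ⟨hy.le, hanti.ge_of_tendsto hbot y⟩
  refine setIntegral_congr_set (ae_eq_of_subset_of_measure_ge hsub ?_
    measurableSet_Ioo.nullMeasurableSet ((measure_mono hsup).trans_lt measure_Icc_lt_top).ne).symm
  exact (measure_mono hsup).trans (by rw [Real.volume_Icc, Real.volume_Ioo])

theorem integral_comp_of_map_eq_withDensity {Ω α E : Type*} [MeasurableSpace Ω]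
    [MeasurableSpace α] [NormedAddCommGroup E] [NormedSpace ℝ E] {μ : Measure Ω}
    {ν : Measure α} {Y : Ω → α} {d : α → ℝ} {φ : α → E} (hY : Measurable Y) (hd : Measurable d)
    (hd0 : ∀ y, 0 ≤ d y) (hφ : StronglyMeasurable φ)
    (hmap : μ.map Y = ν.withDensity fun y ↦ ENNReal.ofReal (d y)) :
    ∫ ω, φ (Y ω) ∂μ = ∫ y, d y • φ y ∂ν := by
  rw [← integral_map hY.aemeasurable hφ.aestronglyMeasurable, hmap]
  refine (integral_withDensity_eq_integral_smul hd.real_toNNReal φ).trans ?_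
  simp only [NNReal.smul_def, coe_toNNReal _ (hd0 _)]

theorem Monotone.mem_Icc_of_tendsto {F : ℝ → ℝ} {a b : ℝ} (hF : Monotone F)
    (hbot : Tendsto F atBot (𝓝 a)) (htop : Tendsto F atTop (𝓝 b)) (y : ℝ) : F y ∈ Icc a b :=
  ⟨hF.le_of_tendsto hbot y, hF.ge_of_tendsto htop y⟩

/-- The density `g` of the statement is `phrRnsDensity γ k (α - 1) β F0 f0`. -/
noncomputable def phrRnsDensity (γ c a b : ℝ) (F0 f0 : ℝ → ℝ) (y : ℝ) : ℝ :=
  c * (1 / γ) * (f0 y / (1 - F0 y)) * ((1 - F0 y) ^ (1 / γ)) ^ a * (1 - (1 - F0 y) ^ (1 / γ)) ^ b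

section phrRnsDensity

variable {γ c a b : ℝ} {F0 f0 : ℝ → ℝ}

theorem phrRnsDensity_nonneg (hγ : 0 ≤ γ) (hc : 0 ≤ c) {y : ℝ} (hf0 : 0 ≤ f0 y)
    (hF0 : F0 y ∈ Icc 0 1) : 0 ≤ phrRnsDensity γ c a b F0 f0 y := by
  have hS : 0 ≤ 1 - F0 y := by linarith [hF0.2]
  have hU1 : (1 - F0 y) ^ (1 / γ) ≤ 1 := rpow_le_one hS (by linarith [hF0.1]) (by positivity)
  have := div_nonneg hf0 hS
  have := rpow_nonneg (rpow_nonneg hS (1 / γ)) a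
  have := rpow_nonneg (sub_nonneg.2 hU1) b
  unfold phrRnsDensity
  positivity

theorem measurable_phrRnsDensity (hF0 : Measurable F0) (hf0 : Measurable f0) :
    Measurable (phrRnsDensity γ c a b F0 f0) := by
  unfold phrRnsDensity
  fun_prop

theorem phrRnsDensity_mul_log_eq (hγ : γ ≠ 0) {y : ℝ} (hS : 0 < 1 - F0 y) :
    phrRnsDensity γ c a b F0 f0 y * log (1 - F0 y) =
      (f0 y * (1 / γ) * (1 - F0 y) ^ (1 / γ - 1)) * (γ * c * (log ((1 - F0 y) ^ (1 / γ)) *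
        ((1 - F0 y) ^ (1 / γ)) ^ (a - 1) * (1 - (1 - F0 y) ^ (1 / γ)) ^ b)) := by
  have hU : (1 - F0 y) ^ (1 / γ) ≠ 0 := (rpow_pos_of_pos hS _).ne'
  rw [phrRnsDensity, log_rpow hS, rpow_sub_one hU, rpow_sub_one hS.ne']
  field_simp

end phrRnsDensity

theorem integral_log_one_sub_of_map_eq_phrRnsDensity {Ω : Type*} [MeasureSpace Ω] {γ c a b : ℝ}
    (hγ : 0 < γ) (hc : 0 ≤ c) {F0 f0 : ℝ → ℝ} (hf0 : ∀ x, HasDerivAt F0 (f0 x) x)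
    (hf0pos : ∀ x, 0 ≤ f0 x) (hF0bot : Tendsto F0 atBot (𝓝 0)) (hF0top : Tendsto F0 atTop (𝓝 1))
    {Y : Ω → ℝ} (hY : Measurable Y) (hdens : Measure.map Y ℙ =
      volume.withDensity fun y ↦ ENNReal.ofReal (phrRnsDensity γ c a b F0 f0 y)) :
    ∫ ω, log (1 - F0 (Y ω)) = γ * c * ∫ u in (0 : ℝ)..1, log u * u ^ (a - 1) * (1 - u) ^ b := by
  have hp : 0 < 1 / γ := by positivity
  have hF0 : Monotone F0 := monotone_of_hasDerivAt_nonneg hf0 hf0pos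
  have hF0c : Continuous F0 := continuous_iff_continuousAt.2 fun x ↦ (hf0 x).continuousAt
  have hF01 := hF0.mem_Icc_of_tendsto hF0bot hF0top
  have hS (y : ℝ) : 0 ≤ 1 - F0 y := by linarith [(hF01 y).2]
  set U : ℝ → ℝ := fun y ↦ (1 - F0 y) ^ (1 / γ)
  have hUc : Continuous U := (continuous_const.sub hF0c).rpow_const fun _ ↦ Or.inr hp.le
  have hUpos (y : ℝ) : 0 < U y ↔ 0 < 1 - F0 y := by
    rw [(rpow_nonneg (hS y) _).lt_iff_ne', (hS y).lt_iff_ne', ne_eq, ne_eq,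
      rpow_eq_zero (hS y) hp.ne']
  have hUanti : Antitone U := fun x y hxy ↦
    rpow_le_rpow (hS y) (by linarith [hF0 hxy]) hp.le
  have hUbot : Tendsto U atBot (𝓝 1) := by
    have := ((tendsto_const_nhds (x := (1 : ℝ))).sub hF0bot).rpow_const (Or.inr hp.le)
    rwa [sub_zero, one_rpow] at this
  have hUtop : Tendsto U atTop (𝓝 0) := by
    have := ((tendsto_const_nhds (x := (1 : ℝ))).sub hF0top).rpow_const (Or.inr hp.le)
    rwa [sub_self, zero_rpow hp.ne'] at this
  have hUderiv (y : ℝ) (hy : 0 < U y) :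
      HasDerivAt U (-(f0 y * (1 / γ) * (1 - F0 y) ^ (1 / γ - 1))) y :=
    (((hf0 y).const_sub 1).rpow_const (Or.inl ((hUpos y).1 hy).ne')).congr_deriv (by ring)
  have hf0m : Measurable f0 := funext (fun x ↦ (hf0 x).deriv) ▸ measurable_deriv F0
  calc ∫ ω, log (1 - F0 (Y ω))
      = ∫ y, phrRnsDensity γ c a b F0 f0 y • log (1 - F0 y) :=
        integral_comp_of_map_eq_withDensity (φ := fun y ↦ log (1 - F0 y)) hY
          (measurable_phrRnsDensity hF0c.measurable hf0m)
          (fun y ↦ phrRnsDensity_nonneg hγ.le hc (hf0pos y) (hF01 y))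
          (measurable_log.comp (measurable_const.sub hF0c.measurable)).stronglyMeasurable hdens
    -- off `{0 < U}` we have `F0 y = 1`, and `log 0 = 0`
    _ = ∫ y in {y | 0 < U y}, phrRnsDensity γ c a b F0 f0 y • log (1 - F0 y) :=
        (setIntegral_eq_integral_of_forall_compl_eq_zero fun y hy ↦ by
          simp [le_antisymm (not_lt.1 (mt (hUpos y).2 hy)) (hS y)]).symm
    _ = ∫ y in {y | 0 < U y}, -(-(f0 y * (1 / γ) * (1 - F0 y) ^ (1 / γ - 1))) •
          (γ * c * (log (U y) * U y ^ (a - 1) * (1 - U y) ^ b)) :=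
        setIntegral_congr_fun (measurableSet_lt measurable_const hUc.measurable) fun y hy ↦ by
          simpa only [smul_eq_mul, neg_neg] using phrRnsDensity_mul_log_eq hγ.ne' ((hUpos y).1 hy)
    _ = ∫ u in Ioo 0 1, γ * c * (log u * u ^ (a - 1) * (1 - u) ^ b) :=
        setIntegral_neg_deriv_smul_comp_of_antitone hUc hUanti hUbot hUtop hUderiv
          fun u ↦ γ * c * (log u * u ^ (a - 1) * (1 - u) ^ b)
    _ = γ * c * ∫ u in (0 : ℝ)..1, log u * u ^ (a - 1) * (1 - u) ^ b := by
      rw [integral_const_mul, intervalIntegral.integral_of_le zero_le_one,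
        integral_Ioc_eq_integral_Ioo]

theorem phr_rns_expectation_log_survival_general
    {Ω : Type*} [MeasureSpace Ω]
    (γ : ℝ) (hγ : 0 < γ) (k : ℕ) (hk : 1 ≤ k) (z : ℝ) (hz : z = 0 ∨ z = 1)
    (α β : ℝ) (hα : α = (1 - z) * (k - 1) + 2) (hβ : β = z * (k - 1))
    (F0 f0 : ℝ → ℝ) (hf0 : ∀ x, HasDerivAt F0 (f0 x) x) (hf0pos : ∀ x, 0 ≤ f0 x)
    (hF0bot : Filter.Tendsto F0 Filter.atBot (nhds 0))
    (hF0top : Filter.Tendsto F0 Filter.atTop (nhds 1))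
    (Y : Ω → ℝ) (hY : Measurable Y)
    (hdens : Measure.map Y ℙ = volume.withDensity (fun y => ENNReal.ofReal
      ((k : ℝ) * (1 / γ) * (f0 y / (1 - F0 y)) *
        ((1 - F0 y) ^ (1 / γ)) ^ (α - 1) * (1 - (1 - F0 y) ^ (1 / γ)) ^ β))) :
    (∫ ω, Real.log (1 - F0 (Y ω)) ∂ℙ) =
      γ * (k : ℝ) * betaFn (α - 1) (β + 1) * (digamma (α - 1) - digamma (α + β)) := by
  obtain ⟨n, rfl⟩ : ∃ n, k = n + 1 := ⟨k - 1, by omega⟩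
  have hab : α - 1 = n + 1 ∧ β + 1 = 1 ∨ α - 1 = 1 ∧ β + 1 = n + 1 := by
    push_cast at hα hβ
    rcases hz with rfl | rfl
    · exact Or.inl ⟨by linarith, by linarith⟩
    · exact Or.inr ⟨by linarith, by linarith⟩
  have hbeta := integral_log_mul_rpow_mul_one_sub_rpow n hab
  rw [add_sub_cancel_right, show α - 1 + (β + 1) = α + β by ring] at hbeta
  rw [integral_log_one_sub_of_map_eq_phrRnsDensity hγ (Nat.cast_nonneg _) hf0 hf0pos hF0bot
    hF0top hY hdens, hbeta]
  ring

/-- Let `Y` be an RNS complete-data observation from the PHR model with set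
size `k` and indicator `z`, with density
`g(y) = k (1/γ) f0(y)/(1-F0 y) ((1-F0 y)^(1/γ))^(α-1) (1-(1-F0 y)^(1/γ))^β`,
where `α = (1-z)(k-1)+2`, `β = z(k-1)`.  Then
`E[log (1 - F0 Y)] = γ k B(α-1, β+1) (ψ(α-1) - ψ(α+β))`. -/
theorem phr_rns_expectation_log_survival
    {Ω : Type*} [MeasureSpace Ω] [IsProbabilityMeasure (ℙ : Measure Ω)]
    (γ : ℝ) (hγ : 0 < γ) (k : ℕ) (hk : 1 ≤ k) (z : ℝ) (hz : z = 0 ∨ z = 1)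
    (α β : ℝ) (hα : α = (1 - z) * (k - 1) + 2) (hβ : β = z * (k - 1))
    (F0 f0 : ℝ → ℝ) (hf0 : ∀ x, HasDerivAt F0 (f0 x) x) (hf0pos : ∀ x, 0 ≤ f0 x)
    (hF0bot : Filter.Tendsto F0 Filter.atBot (nhds 0))
    (hF0top : Filter.Tendsto F0 Filter.atTop (nhds 1))
    (Y : Ω → ℝ) (hY : Measurable Y)
    (hdens : Measure.map Y ℙ = volume.withDensity (fun y => ENNReal.ofReal
      ((k : ℝ) * (1 / γ) * (f0 y / (1 - F0 y)) *
        ((1 - F0 y) ^ (1 / γ)) ^ (α - 1) * (1 - (1 - F0 y) ^ (1 / γ)) ^ β))) :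
    (∫ ω, Real.log (1 - F0 (Y ω)) ∂ℙ) =
      γ * (k : ℝ) * betaFn (α - 1) (β + 1) * (digamma (α - 1) - digamma (α + β)) :=
  phr_rns_expectation_log_survival_general γ hγ k hk z hz α β hα hβ F0 f0 hf0 hf0pos hF0bot hF0top Y
    hY hdens
end

section
/- If Y is the minimum of k i.i.d. Exponential(λ) random variables with probability 1−ζ and the maximum with probability ζ (independent Bernoulli choice), then E[Y] = λ·(ζ·Σ_{j=1}^{k} 1/j + (1−ζ)/k); consequently the Type I incomplete-data MM estimator γ̂ = (1/m)Σ Yi/Ri with Ri = ζ·Σ_{j=1}^{ki} 1/j + (1−ζ)/ki is unbiased for λ. -/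
/-!
By the tail formula `E[V] = ∫₀^∞ P(V > t) dt`, only the tails of the maximum and the minimum of the
sample are needed, and independence makes both explicit: `P(max ≤ t) = (1 - e^{-t/λ})^k` and
`P(min > t) = e^{-kt/λ}`, so the minimum is exponential with mean `λ/k`. Writing
`1 - (1 - e)^k = ∑_{j<k} (1 - e)^j e` as a geometric sum, the `j`-th term integrates to `λ/(j+1)`,
which gives `E[max] = λ ∑_{j=1}^k 1/j`. Since the selector `Z` is independent of the sample,
`E[Y] = ζ E[max] + (1 - ζ) E[min]`; hence every `Y i / R i` has mean `λ`, and so does their average.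
-/

open MeasureTheory ProbabilityTheory Real

/-- `X` is exponentially distributed with *mean* `l` (CDF `1 - exp (-x/l)` for `x ≥ 0`). -/
def IsExponentialMean {Ω : Type*} [MeasureSpace Ω] (X : Ω → ℝ) (l : ℝ) : Prop :=
  ∀ x : ℝ, (ℙ {ω | X ω ≤ x}).toReal = if 0 ≤ x then 1 - Real.exp (-x / l) else 0

open Set Filter Topology

section ExponentialIntegrals

variable {l : ℝ}

lemma one_sub_exp_neg_div_nonneg (hl : 0 < l) {t : ℝ} (ht : 0 ≤ t) : 0 ≤ 1 - exp (-t / l) :=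
  sub_nonneg.mpr <| exp_le_one_iff.mpr <| div_nonpos_of_nonpos_of_nonneg (by linarith) hl.le

lemma hasDerivAt_mul_one_sub_exp_neg_div_pow (hl : l ≠ 0) (n : ℕ) (t : ℝ) :
    HasDerivAt (fun t => l / (n + 1) * (1 - exp (-t / l)) ^ (n + 1))
      ((1 - exp (-t / l)) ^ n * exp (-t / l)) t := by
  have hexp : HasDerivAt (fun t => 1 - exp (-t / l)) (exp (-t / l) / l) t :=
    (((hasDerivAt_id t).neg.div_const l).exp.const_sub 1).congr_deriv (by simp [div_eq_mul_inv])
  refine ((hexp.pow (n + 1)).const_mul (l / (n + 1))).congr_deriv ?_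
  push_cast [Nat.add_sub_cancel]
  field_simp

lemma tendsto_mul_one_sub_exp_neg_div_pow (hl : 0 < l) (n : ℕ) :
    Tendsto (fun t => l / (n + 1) * (1 - exp (-t / l)) ^ (n + 1)) atTop (𝓝 (l / (n + 1))) := by
  have hexp : Tendsto (fun t => exp (-t / l)) atTop (𝓝 0) :=
    tendsto_exp_atBot.comp <| (tendsto_neg_atTop_atBot.comp tendsto_id).atBot_div_const hl
  simpa using ((hexp.const_sub 1).pow (n + 1)).const_mul (l / (n + 1))

lemma integrableOn_one_sub_exp_neg_div_pow_mul (hl : 0 < l) (n : ℕ) :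
    IntegrableOn (fun t => (1 - exp (-t / l)) ^ n * exp (-t / l)) (Ioi 0) :=
  integrableOn_Ioi_deriv_of_nonneg' (fun t _ => hasDerivAt_mul_one_sub_exp_neg_div_pow hl.ne' n t)
    (fun _ ht => by have := one_sub_exp_neg_div_nonneg hl (le_of_lt ht); positivity)
    (tendsto_mul_one_sub_exp_neg_div_pow hl n)

lemma integral_one_sub_exp_neg_div_pow_mul (hl : 0 < l) (n : ℕ) :
    ∫ t in Ioi 0, (1 - exp (-t / l)) ^ n * exp (-t / l) = l / (n + 1) := by
  rw [integral_Ioi_of_hasDerivAt_of_nonneg'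
    (fun t _ => hasDerivAt_mul_one_sub_exp_neg_div_pow hl.ne' n t)
    (fun _ ht => by have := one_sub_exp_neg_div_nonneg hl (le_of_lt ht); positivity)
    (tendsto_mul_one_sub_exp_neg_div_pow hl n)]
  simp

end ExponentialIntegrals

lemma sum_range_div_succ (l : ℝ) (n : ℕ) :
    ∑ j ∈ Finset.range n, l / (j + 1) = l * ∑ j ∈ Finset.Icc 1 n, (1 : ℝ) / j := by
  induction n with
  | zero => simp
  | succ n ih =>
    rw [Finset.sum_range_succ, ih, Finset.sum_Icc_succ_top (by omega)]
    push_cast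
    ring

lemma mul_sum_Icc_one_div_add_div_pos {ζ : ℝ} (hζ : 0 ≤ ζ) {k : ℕ} (hk : 1 ≤ k) :
    0 < ζ * ∑ j ∈ Finset.Icc 1 k, (1 : ℝ) / j + (1 - ζ) / k := by
  have hk' : (0 : ℝ) < k := by exact_mod_cast hk
  have hlast : (1 : ℝ) / k ≤ ∑ j ∈ Finset.Icc 1 k, (1 : ℝ) / j :=
    Finset.single_le_sum (f := fun j : ℕ => (1 : ℝ) / j) (fun j _ => by positivity)
      (Finset.mem_Icc.mpr ⟨hk, le_rfl⟩)
  calc 0 < ζ * (1 / k) + (1 - ζ) / k := by rw [mul_one_div, ← add_div]; simpa using hk'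
    _ ≤ _ := by gcongr

lemma lt_ciInf_iff_of_finite {ι : Type*} [Finite ι] [Nonempty ι] {f : ι → ℝ} {t : ℝ} :
    t < ⨅ i, f i ↔ ∀ i, t < f i := by
  obtain ⟨i, hi⟩ := exists_eq_ciInf_of_finite (f := f)
  exact ⟨fun h j => h.trans_le (ciInf_le (finite_range f).bddBelow j), fun h => hi ▸ h i⟩

section TailFormula

variable {Ω : Type*} [MeasurableSpace Ω] {μ : Measure Ω} [IsFiniteMeasure μ] {V : Ω → ℝ}
  {g : ℝ → ℝ}

lemma integrable_of_measureReal_lt_eq (hV : AEMeasurable V μ) (hnn : 0 ≤ᵐ[μ] V)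
    (hg : IntegrableOn g (Ioi 0)) (htail : ∀ t > 0, μ.real {ω | t < V ω} = g t) :
    Integrable V μ := by
  refine ⟨hV.aestronglyMeasurable, (hasFiniteIntegral_iff_ofReal hnn).mpr ?_⟩
  rw [lintegral_eq_lintegral_meas_lt μ hnn hV, setLIntegral_congr_fun measurableSet_Ioi
    fun t ht => by rw [← ofReal_measureReal, htail t ht]]
  exact hg.lintegral_lt_top

lemma integral_eq_of_measureReal_lt_eq (hV : AEMeasurable V μ) (hnn : 0 ≤ᵐ[μ] V)
    (hg : IntegrableOn g (Ioi 0)) (htail : ∀ t > 0, μ.real {ω | t < V ω} = g t) :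
    ∫ ω, V ω ∂μ = ∫ t in Ioi 0, g t :=
  ((integrable_of_measureReal_lt_eq hV hnn hg htail).integral_eq_integral_meas_lt hnn).trans
    (setIntegral_congr_fun measurableSet_Ioi htail)

end TailFormula

section OrderStatistics

variable {Ω ι : Type*} [MeasurableSpace Ω] {μ : Measure Ω} [Fintype ι] [Nonempty ι]
  {X : ι → Ω → ℝ}

lemma ProbabilityTheory.iIndepFun.measureReal_iSup_le (hX : iIndepFun X μ) (t : ℝ) :
    μ.real {ω | ⨆ j, X j ω ≤ t} = ∏ j, μ.real {ω | X j ω ≤ t} := by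
  have hset : {ω | ⨆ j, X j ω ≤ t} = ⋂ j, X j ⁻¹' Iic t := by
    ext ω
    simp [ciSup_le_iff (finite_range fun j => X j ω).bddAbove]
  rw [hset, measureReal_def, hX.meas_iInter fun j => ⟨Iic t, measurableSet_Iic, rfl⟩,
    ENNReal.toReal_prod]
  rfl

lemma ProbabilityTheory.iIndepFun.measureReal_lt_iInf (hX : iIndepFun X μ) (t : ℝ) :
    μ.real {ω | t < ⨅ j, X j ω} = ∏ j, μ.real {ω | t < X j ω} := by
  have hset : {ω | t < ⨅ j, X j ω} = ⋂ j, X j ⁻¹' Ioi t := by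
    ext ω
    simp [lt_ciInf_iff_of_finite]
  rw [hset, measureReal_def, hX.meas_iInter fun j => ⟨Ioi t, measurableSet_Ioi, rfl⟩,
    ENNReal.toReal_prod]
  rfl

lemma ae_nonneg_iSup (hX : ∀ j, 0 ≤ᵐ[μ] X j) : 0 ≤ᵐ[μ] fun ω => ⨆ j, X j ω := by
  obtain ⟨j⟩ := ‹Nonempty ι›
  filter_upwards [hX j] with ω hω
  exact hω.trans (le_ciSup (finite_range fun j => X j ω).bddAbove j)

lemma ae_nonneg_iInf (hX : ∀ j, 0 ≤ᵐ[μ] X j) : 0 ≤ᵐ[μ] fun ω => ⨅ j, X j ω := by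
  filter_upwards [ae_all_iff.mpr hX] with ω hω
  exact le_ciInf hω

end OrderStatistics

namespace IsExponentialMean

variable {Ω : Type*} [MeasureSpace Ω] {X : Ω → ℝ} {l x : ℝ}

lemma measureReal_le (hX : IsExponentialMean X l) (hx : 0 ≤ x) :
    (ℙ : Measure Ω).real {ω | X ω ≤ x} = 1 - exp (-x / l) := by
  rw [measureReal_def, hX x, if_pos hx]

lemma ae_nonneg [IsFiniteMeasure (ℙ : Measure Ω)] (hX : IsExponentialMean X l) : 0 ≤ᵐ[ℙ] X := by
  have hnull : ∀ n : ℕ, ℙ {ω | X ω ≤ -(1 / (n + 1))} = 0 := fun n => by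
    have h := hX (-(1 / (n + 1)))
    rw [if_neg (not_le.mpr (neg_neg_of_pos (by positivity)))] at h
    exact (ENNReal.toReal_eq_zero_iff _).mp h |>.resolve_right (measure_ne_top _ _)
  refine measure_mono_null (fun ω (hω : ¬ 0 ≤ X ω) => ?_) (measure_iUnion_null hnull)
  obtain ⟨n, hn⟩ := exists_nat_one_div_lt (neg_pos.mpr (not_le.mp hω))
  exact mem_iUnion.mpr ⟨n, show X ω ≤ -(1 / (n + 1)) by linarith⟩

variable [IsProbabilityMeasure (ℙ : Measure Ω)]

lemma measureReal_lt (hXm : Measurable X) (hX : IsExponentialMean X l) (hx : 0 ≤ x) :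
    (ℙ : Measure Ω).real {ω | x < X ω} = exp (-x / l) := by
  have hcompl : {ω | x < X ω} = {ω | X ω ≤ x}ᶜ := by
    ext ω
    simp
  rw [hcompl, probReal_compl_eq_one_sub (measurableSet_le hXm measurable_const),
    hX.measureReal_le hx, sub_sub_cancel]

end IsExponentialMean

section ExponentialOrderStatistics

variable {Ω ι : Type*} [MeasureSpace Ω] [IsProbabilityMeasure (ℙ : Measure Ω)] [Fintype ι]
  [Nonempty ι] {X : ι → Ω → ℝ} {l : ℝ}

lemma measureReal_lt_iSup_of_isExponentialMean (hmeas : ∀ j, Measurable (X j))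
    (hindep : iIndepFun X ℙ) (hexp : ∀ j, IsExponentialMean (X j) l) {t : ℝ} (ht : 0 ≤ t) :
    (ℙ : Measure Ω).real {ω | t < ⨆ j, X j ω} =
      ∑ j ∈ Finset.range (Fintype.card ι), (1 - exp (-t / l)) ^ j * exp (-t / l) := by
  have hcompl : {ω | t < ⨆ j, X j ω} = {ω | ⨆ j, X j ω ≤ t}ᶜ := by
    ext ω
    simp
  rw [hcompl,
    probReal_compl_eq_one_sub (measurableSet_le (Measurable.iSup hmeas) measurable_const),
    hindep.measureReal_iSup_le, Finset.prod_congr rfl fun j _ => (hexp j).measureReal_le ht,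
    Finset.prod_const, Finset.card_univ, ← Finset.sum_mul]
  simpa using (geom_sum_mul_neg (1 - exp (-t / l)) (Fintype.card ι)).symm

lemma measureReal_lt_iInf_of_isExponentialMean (hmeas : ∀ j, Measurable (X j))
    (hindep : iIndepFun X ℙ) (hexp : ∀ j, IsExponentialMean (X j) l) {t : ℝ} (ht : 0 ≤ t) :
    (ℙ : Measure Ω).real {ω | t < ⨅ j, X j ω} = exp (-(Fintype.card ι / l) * t) := by
  rw [hindep.measureReal_lt_iInf,
    Finset.prod_congr rfl fun j _ => (hexp j).measureReal_lt (hmeas j) ht,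
    Finset.prod_const, Finset.card_univ, ← exp_nat_mul]
  ring_nf

lemma integrable_iSup_of_isExponentialMean (hl : 0 < l) (hmeas : ∀ j, Measurable (X j))
    (hindep : iIndepFun X ℙ) (hexp : ∀ j, IsExponentialMean (X j) l) :
    Integrable (fun ω => ⨆ j, X j ω) ℙ :=
  integrable_of_measureReal_lt_eq (Measurable.iSup hmeas).aemeasurable
    (ae_nonneg_iSup fun j => (hexp j).ae_nonneg)
    (integrable_finsetSum _ fun j _ => integrableOn_one_sub_exp_neg_div_pow_mul hl j)
    fun _ ht => measureReal_lt_iSup_of_isExponentialMean hmeas hindep hexp ht.le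

lemma integral_iSup_of_isExponentialMean (hl : 0 < l) (hmeas : ∀ j, Measurable (X j))
    (hindep : iIndepFun X ℙ) (hexp : ∀ j, IsExponentialMean (X j) l) :
    ∫ ω, ⨆ j, X j ω = l * ∑ j ∈ Finset.Icc 1 (Fintype.card ι), (1 : ℝ) / j := by
  rw [integral_eq_of_measureReal_lt_eq (Measurable.iSup hmeas).aemeasurable
    (ae_nonneg_iSup fun j => (hexp j).ae_nonneg)
    (integrable_finsetSum _ fun j _ => integrableOn_one_sub_exp_neg_div_pow_mul hl j)
    fun _ ht => measureReal_lt_iSup_of_isExponentialMean hmeas hindep hexp ht.le,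
    integral_finsetSum _ fun j _ => integrableOn_one_sub_exp_neg_div_pow_mul hl j]
  simp_rw [integral_one_sub_exp_neg_div_pow_mul hl]
  exact sum_range_div_succ l _

lemma integrable_iInf_of_isExponentialMean (hl : 0 < l) (hmeas : ∀ j, Measurable (X j))
    (hindep : iIndepFun X ℙ) (hexp : ∀ j, IsExponentialMean (X j) l) :
    Integrable (fun ω => ⨅ j, X j ω) ℙ :=
  integrable_of_measureReal_lt_eq (Measurable.iInf hmeas).aemeasurable
    (ae_nonneg_iInf fun j => (hexp j).ae_nonneg)
    (integrableOn_exp_mul_Ioi (neg_neg_of_pos (by positivity)) 0)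
    fun _ ht => measureReal_lt_iInf_of_isExponentialMean hmeas hindep hexp ht.le

lemma integral_iInf_of_isExponentialMean (hl : 0 < l) (hmeas : ∀ j, Measurable (X j))
    (hindep : iIndepFun X ℙ) (hexp : ∀ j, IsExponentialMean (X j) l) :
    ∫ ω, ⨅ j, X j ω = l / Fintype.card ι := by
  rw [integral_eq_of_measureReal_lt_eq (Measurable.iInf hmeas).aemeasurable
    (ae_nonneg_iInf fun j => (hexp j).ae_nonneg)
    (integrableOn_exp_mul_Ioi (neg_neg_of_pos (by positivity)) 0)
    fun _ ht => measureReal_lt_iInf_of_isExponentialMean hmeas hindep hexp ht.le,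
    integral_exp_mul_Ioi (neg_neg_of_pos (by positivity)) 0, mul_zero, exp_zero]
  field_simp

end ExponentialOrderStatistics

lemma one_sub_eq_zero_or_one {Ω : Type*} {Z : Ω → ℝ} (hZ : ∀ ω, Z ω = 0 ∨ Z ω = 1) (ω : Ω) :
    1 - Z ω = 0 ∨ 1 - Z ω = 1 := by
  rcases hZ ω with h | h <;> simp [h]

section Mixture

variable {Ω : Type*} [MeasurableSpace Ω] {μ : Measure Ω} {Z U V : Ω → ℝ}

lemma integral_of_forall_eq_zero_or_one (hZm : Measurable Z) (hZ : ∀ ω, Z ω = 0 ∨ Z ω = 1) :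
    ∫ ω, Z ω ∂μ = μ.real {ω | Z ω = 1} := by
  have hind : Z = {ω | Z ω = 1}.indicator 1 :=
    funext fun ω => by rcases hZ ω with h | h <;> simp [h]
  conv_lhs => rw [hind]
  exact integral_indicator_one (hZm (measurableSet_singleton 1))

lemma MeasureTheory.Integrable.mul_of_forall_eq_zero_or_one (hU : Integrable U μ)
    (hZm : Measurable Z) (hZ : ∀ ω, Z ω = 0 ∨ Z ω = 1) : Integrable (fun ω => Z ω * U ω) μ :=
  hU.bdd_mul (c := 1) hZm.aestronglyMeasurable
    (ae_of_all _ fun ω => by rcases hZ ω with h | h <;> simp [h])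

lemma integrable_mul_add_one_sub_mul (hZm : Measurable Z) (hZ : ∀ ω, Z ω = 0 ∨ Z ω = 1)
    (hU : Integrable U μ) (hV : Integrable V μ) :
    Integrable (fun ω => Z ω * U ω + (1 - Z ω) * V ω) μ :=
  (hU.mul_of_forall_eq_zero_or_one hZm hZ).add
    (hV.mul_of_forall_eq_zero_or_one (measurable_const.sub hZm) (one_sub_eq_zero_or_one hZ))

lemma integral_mul_add_one_sub_mul_of_indepFun [IsProbabilityMeasure μ] (hZm : Measurable Z)
    (hZ : ∀ ω, Z ω = 0 ∨ Z ω = 1) (hU : Integrable U μ) (hV : Integrable V μ)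
    (hZU : IndepFun Z U μ) (hZV : IndepFun Z V μ) :
    ∫ ω, Z ω * U ω + (1 - Z ω) * V ω ∂μ =
      μ.real {ω | Z ω = 1} * ∫ ω, U ω ∂μ + (1 - μ.real {ω | Z ω = 1}) * ∫ ω, V ω ∂μ := by
  have hZm' : Measurable fun ω => 1 - Z ω := measurable_const.sub hZm
  have hZ' : ∀ ω, 1 - Z ω = 0 ∨ 1 - Z ω = 1 := one_sub_eq_zero_or_one hZ
  have hZint : Integrable Z μ := by
    simpa using (integrable_const (1 : ℝ)).mul_of_forall_eq_zero_or_one hZm hZ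
  have hZ'V : IndepFun (fun ω => 1 - Z ω) V μ :=
    hZV.comp (measurable_const.sub measurable_id) measurable_id
  rw [integral_add (hU.mul_of_forall_eq_zero_or_one hZm hZ)
      (hV.mul_of_forall_eq_zero_or_one hZm' hZ'),
    hZU.integral_fun_mul_eq_mul_integral hZm.aestronglyMeasurable hU.aestronglyMeasurable,
    hZ'V.integral_fun_mul_eq_mul_integral hZm'.aestronglyMeasurable hV.aestronglyMeasurable,
    integral_sub (integrable_const 1) hZint, integral_const, probReal_univ, one_smul,
    integral_of_forall_eq_zero_or_one hZm hZ]

end Mixture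

lemma integral_one_div_mul_sum_eq {Ω : Type*} [MeasurableSpace Ω] {μ : Measure Ω} {m : ℕ}
    (hm : m ≠ 0) {W : Fin m → Ω → ℝ} {c : ℝ} (hW : ∀ i, Integrable (W i) μ)
    (hc : ∀ i, ∫ ω, W i ω ∂μ = c) :
    ∫ ω, 1 / (m : ℝ) * ∑ i, W i ω ∂μ = c := by
  rw [integral_const_mul, integral_finsetSum _ fun i _ => hW i]
  simp only [hc, Finset.sum_const, Finset.card_univ, Fintype.card_fin, nsmul_eq_mul]
  field_simp

/-- For the Type I RNS design from `Exponential(λ)`: if `Y i` is the maximum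
of `k i` i.i.d. `Exp(λ)` variables with probability `ζ` and the minimum with probability
`1 - ζ` (independent Bernoulli choice), then `E[Y i] = λ (ζ Σ_{j=1}^{k i} 1/j + (1-ζ)/(k i))`;
consequently the Type I MM estimator `(1/m) Σ Y i / R i`, with
`R i = ζ Σ_{j=1}^{k i} 1/j + (1-ζ)/(k i)`, is unbiased for `λ`. -/
theorem type1_mm_estimator_exponential
    {Ω : Type*} [MeasureSpace Ω] [IsProbabilityMeasure (ℙ : Measure Ω)]
    (m : ℕ) (hm : 1 ≤ m) (lam : ℝ) (hlam : 0 < lam)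
    (ζ : ℝ) (hζ : ζ ∈ Set.Icc (0 : ℝ) 1)
    (k : Fin m → ℕ) (hk : ∀ i, 1 ≤ k i)
    (X : (i : Fin m) → Fin (k i) → Ω → ℝ)
    (hmeas : ∀ i j, Measurable (X i j))
    (hindep : ∀ i, iIndepFun (X i) ℙ)
    (hexp : ∀ i j, IsExponentialMean (X i j) lam)
    (Z : Fin m → Ω → ℝ) (hZmeas : ∀ i, Measurable (Z i))
    (hZrange : ∀ i ω, Z i ω = 0 ∨ Z i ω = 1)
    (hZber : ∀ i, (ℙ {ω | Z i ω = 1}).toReal = ζ)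
    (hZindep : ∀ i, IndepFun (Z i) (fun ω => (fun j => X i j ω)) ℙ)
    (Y : Fin m → Ω → ℝ)
    (hY : ∀ i ω, Y i ω = Z i ω * (⨆ j, X i j ω) + (1 - Z i ω) * (⨅ j, X i j ω))
    (R : Fin m → ℝ)
    (hR : ∀ i, R i = ζ * (∑ j ∈ Finset.Icc 1 (k i), (1 : ℝ) / j) + (1 - ζ) / (k i)) :
    (∀ i, (∫ ω, Y i ω ∂ℙ) =
      lam * (ζ * (∑ j ∈ Finset.Icc 1 (k i), (1 : ℝ) / j) + (1 - ζ) / (k i))) ∧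
    (∫ ω, (1 / (m : ℝ)) * ∑ i, Y i ω / R i ∂ℙ) = lam := by
  have hmean : ∀ i, Integrable (Y i) ℙ ∧ ∫ ω, Y i ω ∂ℙ = lam * R i := by
    intro i
    have : Nonempty (Fin (k i)) := Fin.pos_iff_nonempty.mp (hk i)
    have hZmax : IndepFun (Z i) (fun ω => ⨆ j, X i j ω) ℙ :=
      (hZindep i).comp measurable_id (Measurable.iSup measurable_pi_apply)
    have hZmin : IndepFun (Z i) (fun ω => ⨅ j, X i j ω) ℙ :=
      (hZindep i).comp measurable_id (Measurable.iInf measurable_pi_apply)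
    have hmax := integrable_iSup_of_isExponentialMean hlam (hmeas i) (hindep i) (hexp i)
    have hmin := integrable_iInf_of_isExponentialMean hlam (hmeas i) (hindep i) (hexp i)
    rw [funext (hY i)]
    refine ⟨integrable_mul_add_one_sub_mul (hZmeas i) (hZrange i) hmax hmin, ?_⟩
    rw [integral_mul_add_one_sub_mul_of_indepFun (hZmeas i) (hZrange i) hmax hmin hZmax hZmin,
      measureReal_def, hZber i,
      integral_iSup_of_isExponentialMean hlam (hmeas i) (hindep i) (hexp i),
      integral_iInf_of_isExponentialMean hlam (hmeas i) (hindep i) (hexp i), Fintype.card_fin, hR i]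
    ring
  refine ⟨fun i => (hmean i).2.trans (by rw [hR i]), ?_⟩
  refine integral_one_div_mul_sum_eq (by omega) (fun i => (hmean i).1.div_const _) fun i => ?_
  have hRpos : 0 < R i := hR i ▸ mul_sum_Icc_one_div_add_div_pos hζ.1 (hk i)
  rw [integral_div, (hmean i).2, mul_div_cancel_right₀ _ hRpos.ne']
end

section
/- In the PRHR model F(x) = F0(x)^{1/γ}, if Y is an RNS observation with known set size k and Bernoulli(ζ) max/min indicator, then E[−log F0(Y)] = γ·((1−ζ)·Σ_{j=1}^{k} 1/j + ζ/k), so the MM estimator −(1/m)Σ (log F0(Yi))/Ri with Ri = (1−ζ)·Σ_{j=1}^{ki} 1/j + ζ/ki is unbiased for γ. -/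
/-!
`G = F0 ^ (1/γ)` is the continuous CDF of every draw `X j`, so the `U j = G (X j)` are
i.i.d. uniform on `(0, 1)` and, `G` being monotone and continuous,
`G Y = Z * max U + (1 - Z) * min U`. Independence of `Z` from the draws gives
`P (G Y < u) = ζ u^k + (1 - ζ) (1 - (1 - u)^k)`, and the layer cake formula turns this into
`E[-log G Y] = ∫₀^∞ ζ e^{-kt} + (1 - ζ) (1 - (1 - e^{-t})^k) dt = ζ / k + (1 - ζ) H_k`,
the harmonic number coming from `1 - (1 - x)^(k+1) = (1 - (1 - x)^k) + (1 - x)^k x`.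
Since `-log F0 = γ (-log G)`, this is `γ R`, and unbiasedness follows by linearity.
-/

open MeasureTheory ProbabilityTheory Real
open Set Filter Topology

lemma ciSup_lt_iff_of_finite {ι α : Type*} [Finite ι] [Nonempty ι]
    [ConditionallyCompleteLinearOrder α] {f : ι → α} {a : α} :
    ⨆ j, f j < a ↔ ∀ j, f j < a := by
  obtain ⟨i, hi⟩ := exists_eq_ciSup_of_finite (f := f)
  exact ⟨fun h j => (le_ciSup (finite_range f).bddAbove j).trans_lt h, fun h => hi ▸ h i⟩

lemma integrableOn_exp_neg_pow_Ioi {n : ℕ} (hn : n ≠ 0) :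
    IntegrableOn (fun t : ℝ => exp (-t) ^ n) (Ioi 0) := by
  simpa [← Real.exp_nat_mul, mul_neg, neg_mul] using
    integrableOn_exp_mul_Ioi (a := -n) (by simpa [Nat.pos_iff_ne_zero] using hn) 0

lemma integral_exp_neg_pow_Ioi {n : ℕ} (hn : n ≠ 0) :
    ∫ t in Ioi 0, exp (-t) ^ n = 1 / n := by
  simpa [← Real.exp_nat_mul, mul_neg, neg_mul] using
    integral_exp_mul_Ioi (a := -n) (by simpa [Nat.pos_iff_ne_zero] using hn) 0

lemma integrableOn_one_sub_exp_neg_pow_mul_exp_neg (n : ℕ) :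
    IntegrableOn (fun t : ℝ => (1 - exp (-t)) ^ n * exp (-t)) (Ioi 0) := by
  refine (exp_neg_integrableOn_Ioi 0 one_pos).mono' (by fun_prop) ?_
  filter_upwards [ae_restrict_mem measurableSet_Ioi] with t (ht : 0 < t)
  have h0 : 0 ≤ 1 - exp (-t) := sub_nonneg.mpr (exp_le_one_iff.mpr (by linarith))
  rw [norm_of_nonneg (mul_nonneg (pow_nonneg h0 n) (exp_pos _).le), neg_one_mul]
  exact mul_le_of_le_one_left (exp_pos _).le (pow_le_one₀ h0 (by linarith [exp_pos (-t)]))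

lemma integral_one_sub_exp_neg_pow_mul_exp_neg (n : ℕ) :
    ∫ t in Ioi 0, (1 - exp (-t)) ^ n * exp (-t) = 1 / (n + 1) := by
  have hderiv : ∀ t ∈ Ici (0 : ℝ), HasDerivAt (fun t => (1 - exp (-t)) ^ (n + 1) / (n + 1))
      ((1 - exp (-t)) ^ n * exp (-t)) t := fun t _ => by
    refine ((((hasDerivAt_neg t).exp.const_sub 1).fun_pow (n + 1)).div_const
      ((n : ℝ) + 1)).congr_deriv ?_
    push_cast
    field_simp
  have hlim : Tendsto (fun t : ℝ => (1 - exp (-t)) ^ (n + 1) / (n + 1)) atTop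
      (𝓝 (1 / (n + 1))) := by
    simpa using
      ((tendsto_exp_neg_atTop_nhds_zero.const_sub 1).pow (n + 1)).div_const ((n : ℝ) + 1)
  rw [integral_Ioi_of_hasDerivAt_of_tendsto' hderiv
    (integrableOn_one_sub_exp_neg_pow_mul_exp_neg n) hlim]
  simp

lemma one_sub_one_sub_pow_succ (x : ℝ) (n : ℕ) :
    1 - (1 - x) ^ (n + 1) = (1 - (1 - x) ^ n) + (1 - x) ^ n * x := by
  ring

lemma integrableOn_one_sub_one_sub_exp_neg_pow (n : ℕ) :
    IntegrableOn (fun t : ℝ => 1 - (1 - exp (-t)) ^ n) (Ioi 0) := by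
  induction n with
  | zero => simp
  | succ n ih =>
    simp_rw [one_sub_one_sub_pow_succ]
    exact ih.add (integrableOn_one_sub_exp_neg_pow_mul_exp_neg n)

lemma integral_one_sub_one_sub_exp_neg_pow (n : ℕ) :
    ∫ t in Ioi 0, (1 - (1 - exp (-t)) ^ n) = ∑ j ∈ Finset.Icc 1 n, (1 : ℝ) / j := by
  induction n with
  | zero => simp
  | succ n ih =>
    simp_rw [one_sub_one_sub_pow_succ]
    rw [integral_add (integrableOn_one_sub_one_sub_exp_neg_pow n)
      (integrableOn_one_sub_exp_neg_pow_mul_exp_neg n), ih,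
      integral_one_sub_exp_neg_pow_mul_exp_neg, Finset.sum_Icc_succ_top (by omega)]
    push_cast
    rfl

structure IsContinuousCDF (G : ℝ → ℝ) : Prop where
  mono : Monotone G
  continuous : Continuous G
  tendsto_atBot : Tendsto G atBot (𝓝 0)
  tendsto_atTop : Tendsto G atTop (𝓝 1)

namespace IsContinuousCDF

variable {G : ℝ → ℝ}

lemma nonneg (hG : IsContinuousCDF G) (x : ℝ) : 0 ≤ G x :=
  hG.mono.le_of_tendsto hG.tendsto_atBot x

lemma le_one (hG : IsContinuousCDF G) (x : ℝ) : G x ≤ 1 :=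
  hG.mono.ge_of_tendsto hG.tendsto_atTop x

lemma rpow (hG : IsContinuousCDF G) {p : ℝ} (hp : 0 < p) :
    IsContinuousCDF fun x => G x ^ p where
  mono _ _ hxy := rpow_le_rpow (hG.nonneg _) (hG.mono hxy) hp.le
  continuous := hG.continuous.rpow_const fun _ => Or.inr hp.le
  tendsto_atBot := by
    simpa [zero_rpow hp.ne'] using hG.tendsto_atBot.rpow_const (Or.inr hp.le)
  tendsto_atTop := by
    simpa using hG.tendsto_atTop.rpow_const (Or.inr hp.le)

end IsContinuousCDF

section

variable {Ω : Type*} [MeasurableSpace Ω] {μ : Measure Ω}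

theorem IsContinuousCDF.measureReal_comp_lt [IsFiniteMeasure μ] {G : ℝ → ℝ}
    (hG : IsContinuousCDF G) {X : Ω → ℝ} (hX : ∀ x, μ.real {ω | X ω ≤ x} = G x) {u : ℝ}
    (hu : u ∈ Ioo 0 1) : μ.real {ω | G (X ω) < u} = u := by
  have hrange : ∀ v ∈ Ioo (0 : ℝ) 1, v ∈ range G := fun v hv =>
    mem_range_of_exists_le_of_exists_ge hG.continuous
      (hG.tendsto_atBot.eventually_le_const hv.1).exists
      (hG.tendsto_atTop.eventually_const_le hv.2).exists
  obtain ⟨x, rfl⟩ := hrange u hu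
  refine le_antisymm ?_ (le_of_forall_lt_imp_le_of_dense fun v hv => ?_)
  · calc μ.real {ω | G (X ω) < G x} ≤ μ.real {ω | X ω ≤ x} :=
          measureReal_mono fun ω h => (hG.mono.reflect_lt h).le
      _ = G x := hX x
  · rcases le_or_gt v 0 with hv0 | hv0
    · exact hv0.trans measureReal_nonneg
    obtain ⟨y, rfl⟩ := hrange v ⟨hv0, hv.trans hu.2⟩
    calc G y = μ.real {ω | X ω ≤ y} := (hX y).symm
      _ ≤ _ := measureReal_mono fun ω h => (hG.mono h).trans_lt hv

theorem measureReal_bernoulli_mix_mem [IsProbabilityMeasure μ] {β : Type*} [MeasurableSpace β]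
    {Z : Ω → ℝ} {V : Ω → β} (hZ : Measurable Z) (hV : Measurable V) (hZV : IndepFun Z V μ)
    (hZrange : ∀ ω, Z ω = 0 ∨ Z ω = 1) {f g : β → ℝ} (hf : Measurable f) (hg : Measurable g)
    {S : Set ℝ} (hS : MeasurableSet S) :
    μ.real {ω | Z ω * f (V ω) + (1 - Z ω) * g (V ω) ∈ S} =
      μ.real {ω | Z ω = 1} * μ.real {ω | f (V ω) ∈ S} +
        (1 - μ.real {ω | Z ω = 1}) * μ.real {ω | g (V ω) ∈ S} := by
  have hZ0 : Z ⁻¹' {0} = (Z ⁻¹' {1})ᶜ := by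
    ext ω
    rcases hZrange ω with h | h <;> simp [h]
  have hsplit : {ω | Z ω * f (V ω) + (1 - Z ω) * g (V ω) ∈ S} =
      (Z ⁻¹' {1} ∩ V ⁻¹' (f ⁻¹' S)) ∪ (Z ⁻¹' {0} ∩ V ⁻¹' (g ⁻¹' S)) := by
    ext ω
    rcases hZrange ω with h | h <;> simp [h]
  have hindep (T : Set β) (hT : MeasurableSet T) (c : ℝ) :
      μ.real (Z ⁻¹' {c} ∩ V ⁻¹' T) = μ.real (Z ⁻¹' {c}) * μ.real (V ⁻¹' T) := by
    simp only [measureReal_def, ENNReal.toReal_mul,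
      hZV.measure_inter_preimage_eq_mul _ _ (measurableSet_singleton c) hT]
  rw [hsplit, measureReal_union, hindep _ (hf hS), hindep _ (hg hS), hZ0,
    probReal_compl_eq_one_sub (hZ (measurableSet_singleton 1))]
  · rfl
  · rw [hZ0]
    exact (disjoint_compl_left.mono inter_subset_left inter_subset_left).symm
  · exact (hZ (measurableSet_singleton 0)).inter (hV (hg hS))

section OrderStatistics

variable {ι : Type*} [Fintype ι] [Nonempty ι] {U : ι → Ω → ℝ}

theorem measureReal_iSup_lt (hU : iIndepFun U μ) (u : ℝ) :
    μ.real {ω | ⨆ j, U j ω < u} = ∏ j, μ.real {ω | U j ω < u} := by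
  have hset : {ω | ⨆ j, U j ω < u} = ⋂ j, U j ⁻¹' Iio u := by
    ext ω
    simp [ciSup_lt_iff_of_finite]
  simp_rw [hset, measureReal_def, ← ENNReal.toReal_prod]
  rw [hU.meas_iInter fun j => ⟨Iio u, measurableSet_Iio, rfl⟩]
  rfl

theorem measureReal_le_iInf (hU : iIndepFun U μ) (u : ℝ) :
    μ.real {ω | u ≤ ⨅ j, U j ω} = ∏ j, μ.real {ω | u ≤ U j ω} := by
  have hset : {ω | u ≤ ⨅ j, U j ω} = ⋂ j, U j ⁻¹' Ici u := by
    ext ω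
    simp [le_ciInf_iff (Set.finite_range _).bddBelow]
  simp_rw [hset, measureReal_def, ← ENNReal.toReal_prod]
  rw [hU.meas_iInter fun j => ⟨Ici u, measurableSet_Ici, rfl⟩]
  rfl

theorem measureReal_iInf_lt [IsProbabilityMeasure μ] (hUmeas : ∀ j, Measurable (U j))
    (hU : iIndepFun U μ) (u : ℝ) :
    μ.real {ω | ⨅ j, U j ω < u} = 1 - ∏ j, (1 - μ.real {ω | U j ω < u}) := by
  have hcompl (V : Ω → ℝ) (hV : Measurable V) :
      μ.real {ω | V ω < u} = 1 - μ.real {ω | u ≤ V ω} := by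
    rw [← probReal_compl_eq_one_sub (measurableSet_le measurable_const hV)]
    congr 1
    ext ω
    simp
  simp_rw [hcompl _ (Measurable.iInf hUmeas), measureReal_le_iInf hU, hcompl _ (hUmeas _),
    sub_sub_cancel]

theorem measureReal_rns_lt [IsProbabilityMeasure μ] (hUmeas : ∀ j, Measurable (U j))
    (hU : iIndepFun U μ) {Z : Ω → ℝ} (hZ : Measurable Z) (hZrange : ∀ ω, Z ω = 0 ∨ Z ω = 1)
    (hZU : IndepFun Z (fun ω j => U j ω) μ) {u p : ℝ} (hp : ∀ j, μ.real {ω | U j ω < u} = p) :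
    μ.real {ω | Z ω * (⨆ j, U j ω) + (1 - Z ω) * (⨅ j, U j ω) < u} =
      μ.real {ω | Z ω = 1} * p ^ Fintype.card ι +
        (1 - μ.real {ω | Z ω = 1}) * (1 - (1 - p) ^ Fintype.card ι) := by
  have := measureReal_bernoulli_mix_mem hZ (measurable_pi_lambda _ hUmeas) hZU hZrange
    (f := fun v => ⨆ j, v j) (g := fun v => ⨅ j, v j) (.iSup measurable_pi_apply)
    (.iInf measurable_pi_apply) (measurableSet_Iio (a := u))
  simp only [mem_Iio] at this
  rw [this, measureReal_iSup_lt hU, measureReal_iInf_lt hUmeas hU]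
  simp [hp]

end OrderStatistics

lemma measure_eq_zero_of_measureReal_lt_le [IsFiniteMeasure μ] {W : Ω → ℝ} {φ : ℝ → ℝ}
    (hφ : Tendsto φ (𝓝[>] 0) (𝓝 0)) (hW : ∀ u ∈ Ioo 0 1, μ.real {ω | W ω < u} ≤ φ u) :
    μ {ω | W ω = 0} = 0 := by
  rw [← measureReal_eq_zero_iff]
  refine le_antisymm (ge_of_tendsto hφ ?_) measureReal_nonneg
  filter_upwards [Ioo_mem_nhdsGT one_pos] with u hu
  exact (measureReal_mono fun ω (h : W ω = 0) => show W ω < u from h ▸ hu.1).trans (hW u hu)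

lemma measureReal_lt_neg_log {W : Ω → ℝ} (hW : ∀ ω, 0 ≤ W ω) (hW0 : μ {ω | W ω = 0} = 0)
    {t : ℝ} (ht : 0 ≤ t) : μ.real {ω | t < -log (W ω)} = μ.real {ω | W ω < exp (-t)} := by
  -- `log 0 = 0`, so the atom at `W = 0` is not seen by `-log W` and must be removed by hand.
  have hset : {ω | t < -log (W ω)} = {ω | W ω < exp (-t)} \ {ω | W ω = 0} := by
    ext ω
    rcases (hW ω).eq_or_lt with h | h
    · simp [← h, ht]
    · simp [h.ne', lt_neg, log_lt_iff_lt_exp h]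
  rw [hset, measureReal_def, measure_sdiff_null hW0, measureReal_def]

theorem integrable_and_integral_eq_of_measureReal_lt [IsFiniteMeasure μ] {f : Ω → ℝ}
    (hf : Measurable f) (hf0 : ∀ ω, 0 ≤ f ω) {τ : ℝ → ℝ}
    (hτ : ∀ t ∈ Ioi 0, μ.real {ω | t < f ω} = τ t) (hτint : IntegrableOn τ (Ioi 0)) :
    Integrable f μ ∧ ∫ ω, f ω ∂μ = ∫ t in Ioi 0, τ t := by
  have hτ0 : 0 ≤ᵐ[volume.restrict (Ioi 0)] τ := (ae_restrict_iff' measurableSet_Ioi).mpr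
    (ae_of_all _ fun t ht => hτ t ht ▸ measureReal_nonneg)
  have hlint : ∫⁻ ω, ENNReal.ofReal (f ω) ∂μ = ENNReal.ofReal (∫ t in Ioi 0, τ t) := by
    rw [lintegral_eq_lintegral_meas_lt μ (ae_of_all _ hf0) hf.aemeasurable,
      ofReal_integral_eq_lintegral_ofReal hτint hτ0]
    refine setLIntegral_congr_fun measurableSet_Ioi fun t ht => ?_
    rw [← hτ t ht, ofReal_measureReal]
  have hint : Integrable f μ := ⟨hf.aestronglyMeasurable,
    (hasFiniteIntegral_iff_ofReal (ae_of_all _ hf0)).mpr (hlint ▸ ENNReal.ofReal_lt_top)⟩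
  refine ⟨hint, ?_⟩
  rw [hint.integral_eq_integral_meas_lt (ae_of_all _ hf0)]
  exact setIntegral_congr_fun measurableSet_Ioi hτ

lemma integrableOn_rns_tail (ζ : ℝ) {n : ℕ} (hn : n ≠ 0) :
    IntegrableOn (fun t => ζ * exp (-t) ^ n + (1 - ζ) * (1 - (1 - exp (-t)) ^ n)) (Ioi 0) :=
  ((integrableOn_exp_neg_pow_Ioi hn).const_mul ζ).add
    ((integrableOn_one_sub_one_sub_exp_neg_pow n).const_mul (1 - ζ))

lemma integral_rns_tail (ζ : ℝ) {n : ℕ} (hn : n ≠ 0) :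
    ∫ t in Ioi 0, (ζ * exp (-t) ^ n + (1 - ζ) * (1 - (1 - exp (-t)) ^ n)) =
      (1 - ζ) * ∑ j ∈ Finset.Icc 1 n, (1 : ℝ) / j + ζ / n := by
  rw [integral_add ((integrableOn_exp_neg_pow_Ioi hn).const_mul ζ)
      ((integrableOn_one_sub_one_sub_exp_neg_pow n).const_mul (1 - ζ)),
    integral_const_mul, integral_const_mul, integral_exp_neg_pow_Ioi hn,
    integral_one_sub_one_sub_exp_neg_pow]
  ring

theorem IsContinuousCDF.integral_neg_log_rns [IsProbabilityMeasure μ] {G : ℝ → ℝ}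
    (hG : IsContinuousCDF G) {n : ℕ} (hn : n ≠ 0) {X : Fin n → Ω → ℝ}
    (hXmeas : ∀ j, Measurable (X j)) (hXindep : iIndepFun X μ)
    (hX : ∀ j x, μ.real {ω | X j ω ≤ x} = G x) {Z : Ω → ℝ} (hZmeas : Measurable Z)
    (hZrange : ∀ ω, Z ω = 0 ∨ Z ω = 1) (hZX : IndepFun Z (fun ω j => X j ω) μ) {ζ : ℝ}
    (hζ : μ.real {ω | Z ω = 1} = ζ) {Y : Ω → ℝ}
    (hY : ∀ ω, Y ω = Z ω * (⨆ j, X j ω) + (1 - Z ω) * (⨅ j, X j ω)) :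
    Integrable (fun ω => -log (G (Y ω))) μ ∧
      ∫ ω, -log (G (Y ω)) ∂μ = (1 - ζ) * ∑ j ∈ Finset.Icc 1 n, (1 : ℝ) / j + ζ / n := by
  have : NeZero n := ⟨hn⟩
  have hGmeas := hG.continuous.measurable
  have hYmeas : Measurable Y := by
    rw [funext hY]
    fun_prop
  have hGY : ∀ ω, G (Y ω) = Z ω * (⨆ j, G (X j ω)) + (1 - Z ω) * ⨅ j, G (X j ω) := by
    intro ω
    rcases hZrange ω with h | h
    · simpa [hY, h] using hG.mono.map_ciInf_of_continuousAt hG.continuous.continuousAt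
        (finite_range fun j => X j ω).bddBelow
    · simpa [hY, h] using hG.mono.map_ciSup_of_continuousAt hG.continuous.continuousAt
        (finite_range fun j => X j ω).bddAbove
  have htail : ∀ u ∈ Ioo (0 : ℝ) 1,
      μ.real {ω | G (Y ω) < u} = ζ * u ^ n + (1 - ζ) * (1 - (1 - u) ^ n) := by
    intro u hu
    simp_rw [hGY]
    simpa [hζ] using measureReal_rns_lt (U := fun j ω => G (X j ω))
      (fun j => hGmeas.comp (hXmeas j)) (hXindep.comp _ fun _ => hGmeas) hZmeas hZrange
      (hZX.comp (φ := id) (ψ := fun (v : Fin n → ℝ) j => G (v j)) measurable_id (by fun_prop))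
      fun j => hG.measureReal_comp_lt (hX j) hu
  have hnull : μ {ω | G (Y ω) = 0} = 0 := by
    refine measure_eq_zero_of_measureReal_lt_le
      (φ := fun u => ζ * u ^ n + (1 - ζ) * (1 - (1 - u) ^ n)) ?_ fun u hu => (htail u hu).le
    simpa [hn] using ((show Continuous fun u : ℝ => ζ * u ^ n + (1 - ζ) * (1 - (1 - u) ^ n) by
      fun_prop).tendsto 0).mono_left nhdsWithin_le_nhds
  obtain ⟨hint, hval⟩ := integrable_and_integral_eq_of_measureReal_lt
    (f := fun ω => -log (G (Y ω))) (by fun_prop)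
    (fun ω => neg_nonneg.mpr (log_nonpos (hG.nonneg _) (hG.le_one _)))
    (fun t (ht : 0 < t) => (measureReal_lt_neg_log (fun ω => hG.nonneg _) hnull ht.le).trans
      (htail _ ⟨exp_pos _, exp_lt_one_iff.mpr (neg_lt_zero.mpr ht)⟩))
    (integrableOn_rns_tail ζ hn)
  exact ⟨hint, hval.trans (integral_rns_tail ζ hn)⟩

end

lemma log_eq_mul_log_rpow_one_div {x γ : ℝ} (hx : 0 ≤ x) (hγ : γ ≠ 0) :
    log x = γ * log (x ^ (1 / γ)) := by
  rcases hx.eq_or_lt with rfl | hx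
  · simp [zero_rpow (inv_ne_zero hγ)]
  · rw [log_rpow hx]
    field_simp

lemma one_div_le_sum_Icc_one_div {n : ℕ} (hn : n ≠ 0) :
    1 / (n : ℝ) ≤ ∑ j ∈ Finset.Icc 1 n, (1 : ℝ) / j :=
  Finset.single_le_sum (f := fun j : ℕ => (1 : ℝ) / j) (fun j _ => by positivity)
    (Finset.mem_Icc.mpr ⟨Nat.one_le_iff_ne_zero.mpr hn, le_rfl⟩)

lemma rns_weight_pos {ζ : ℝ} (hζ : ζ ∈ Icc 0 1) {n : ℕ} (hn : n ≠ 0) :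
    0 < (1 - ζ) * ∑ j ∈ Finset.Icc 1 n, (1 : ℝ) / j + ζ / n :=
  calc 0 < 1 / (n : ℝ) := by positivity
    _ = (1 - ζ) * (1 / n) + ζ / n := by ring
    _ ≤ _ := by
      gcongr
      exacts [sub_nonneg.mpr hζ.2, one_div_le_sum_Icc_one_div hn]

/-- In the PRHR model `F(x) = (F0 x)^(1/γ)`: if `Y i` is an RNS observation
with known set size `k i` and `Bernoulli(ζ)` max/min indicator, then
`E[-log F0 (Y i)] = γ ((1-ζ) Σ_{j=1}^{k i} 1/j + ζ/(k i))`, so the MM estimator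
`-(1/m) Σ log (F0 (Y i)) / R i`, with `R i = (1-ζ) Σ_{j=1}^{k i} 1/j + ζ/(k i)`,
is unbiased for `γ`. -/
theorem prhr_type1_mm_estimator
    {Ω : Type*} [MeasureSpace Ω] [IsProbabilityMeasure (ℙ : Measure Ω)]
    (m : ℕ) (hm : 1 ≤ m) (γ : ℝ) (hγ : 0 < γ)
    (ζ : ℝ) (hζ : ζ ∈ Set.Icc (0 : ℝ) 1)
    (F0 : ℝ → ℝ) (hF0mono : Monotone F0) (hF0cont : Continuous F0)
    (hF0bot : Filter.Tendsto F0 Filter.atBot (nhds 0))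
    (hF0top : Filter.Tendsto F0 Filter.atTop (nhds 1))
    (k : Fin m → ℕ) (hk : ∀ i, 1 ≤ k i)
    (X : (i : Fin m) → Fin (k i) → Ω → ℝ)
    (hmeas : ∀ i j, Measurable (X i j))
    (hindep : ∀ i, iIndepFun (X i) ℙ)
    (hcdf : ∀ i j x, (ℙ {ω | X i j ω ≤ x}).toReal = (F0 x) ^ (1 / γ))
    (Z : Fin m → Ω → ℝ) (hZmeas : ∀ i, Measurable (Z i))
    (hZrange : ∀ i ω, Z i ω = 0 ∨ Z i ω = 1)
    (hZber : ∀ i, (ℙ {ω | Z i ω = 1}).toReal = ζ)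
    (hZindep : ∀ i, IndepFun (Z i) (fun ω => (fun j => X i j ω)) ℙ)
    (Y : Fin m → Ω → ℝ)
    (hY : ∀ i ω, Y i ω = Z i ω * (⨆ j, X i j ω) + (1 - Z i ω) * (⨅ j, X i j ω))
    (R : Fin m → ℝ)
    (hR : ∀ i, R i = (1 - ζ) * (∑ j ∈ Finset.Icc 1 (k i), (1 : ℝ) / j) + ζ / (k i)) :
    (∀ i, (∫ ω, -Real.log (F0 (Y i ω)) ∂ℙ) =
      γ * ((1 - ζ) * (∑ j ∈ Finset.Icc 1 (k i), (1 : ℝ) / j) + ζ / (k i))) ∧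
    (∫ ω, -(1 / (m : ℝ)) * ∑ i, Real.log (F0 (Y i ω)) / R i ∂ℙ) = γ := by
  have hF0 : IsContinuousCDF F0 := ⟨hF0mono, hF0cont, hF0bot, hF0top⟩
  have hk0 i : k i ≠ 0 := Nat.one_le_iff_ne_zero.mp (hk i)
  have hmean i : Integrable (fun ω => log (F0 (Y i ω))) ℙ ∧
      ∫ ω, -log (F0 (Y i ω)) ∂ℙ = γ * R i := by
    obtain ⟨hint, hval⟩ := (hF0.rpow (one_div_pos.mpr hγ)).integral_neg_log_rns (hk0 i)
      (hmeas i) (hindep i) (hcdf i) (hZmeas i) (hZrange i) (hZindep i) (hZber i) (hY i)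
    have hlog ω : log (F0 (Y i ω)) = -(γ * -log (F0 (Y i ω) ^ (1 / γ))) := by
      rw [log_eq_mul_log_rpow_one_div (hF0.nonneg _) hγ.ne']
      ring
    simp_rw [hlog, neg_neg]
    exact ⟨(hint.const_mul γ).neg, by rw [integral_const_mul, hval, hR i]⟩
  refine ⟨fun i => (hmean i).2.trans (by rw [hR i]), ?_⟩
  have hterm i : ∫ ω, log (F0 (Y i ω)) / R i ∂ℙ = -γ := by
    have hRi : R i ≠ 0 := (hR i ▸ rns_weight_pos hζ (hk0 i)).ne'
    rw [integral_div, ← neg_neg (∫ ω, log (F0 (Y i ω)) ∂ℙ), ← integral_neg, (hmean i).2]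
    field_simp
  rw [integral_const_mul, integral_finsetSum _ fun i _ => (hmean i).1.div_const _]
  simp only [hterm, Finset.sum_const, Finset.card_univ, Fintype.card_fin, nsmul_eq_mul]
  field_simp [Nat.cast_ne_zero.mpr (Nat.one_le_iff_ne_zero.mp hm)]
end
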